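/- Let C = {z ∈ X : Az = b} satisfy C ∩ int(dom φ) ≠ ∅, and for x ∈ int(dom φ) define the dual objective Ψ^x_C(λ) = φ*(∇φ(x) + A*λ) − φ*(∇φ(x)) − ⟨λ, b⟩ for λ ∈ Y. Let (x,λ) ∈ int(dom φ) × Y be such that ∇φ(x) + A*λ ∈ int(dom φ*). Then: (i) for every z ∈ C ∩ dom φ, Ψ^x_C(λ) = D_φ(z, ∇φ*(∇φ(x) + A*λ)) − D_φ(z, x); (ii) for every z ∈ C ∩ dom φ, D_φ(z, P_C(x)) ≤ D_φ(z, ∇φ*(∇φ(x) + A*λ)). -/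

import Mathlib

/-! For `w ∈ int (dom φ*)`, `p = ∇φ*(w)` is a point of `int (dom φ)` at which the supremum
defining `φ*(w)` is attained, so that `∇φ(p) = w` and `φ*(w) = ⟪p, w⟫ - φ(p)`. Expanding the
Bregman distances then gives `D(z, p) - D(z, x) = φ*(w) - φ*(∇φ x) - ⟪z, A*λ⟫`, and
`⟪z, A*λ⟫ = ⟪λ, b⟫` for `z ∈ C`: this is (i). In particular `D(z, p) - D(z, x)` takes the same
value at every `z ∈ C ∩ dom φ`; comparing `z` with `q = P_C(x)` and using the Bregman–Pythagoras
inequality `D(z, q) + D(q, x) ≤ D(z, x)` gives `D(z, q) ≤ D(z, p) - D(q, p) ≤ D(z, p)`. -/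

open Set Filter Topology MeasureTheory ProbabilityTheory
open scoped InnerProductSpace ENNReal Classical

noncomputable section

/-- A Legendre function on a Euclidean space `X`, represented by its (finite) values `f` on its
effective domain `dom`, together with the data of its Fenchel conjugate (`conj` on `domConj`)
and the gradients of both. -/
structure LegendreFn (X : Type*) [NormedAddCommGroup X] [InnerProductSpace ℝ X]
    [FiniteDimensional ℝ X] where
  /-- the values of `φ` on its domain -/
  f : X → ℝ
  /-- the effective domain of `φ` (`φ = +∞` outside of it) -/
  dom : Set X
  /-- the values of the Fenchel conjugate `φ*` on its domain -/
  conj : X → ℝ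
  /-- the effective domain of `φ*` -/
  domConj : Set X
  /-- the gradient of `φ` (meaningful on `interior dom`) -/
  grad : X → X
  /-- the gradient of `φ*` (meaningful on `interior domConj`) -/
  gradConj : X → X
  dom_nonempty : dom.Nonempty
  int_dom_nonempty : (interior dom).Nonempty
  dom_convex : Convex ℝ dom
  convexOn : ConvexOn ℝ dom f
  /-- `φ` is closed: the epigraph of the extended function is closed -/
  closedEpi : IsClosed {p : X × ℝ | p.1 ∈ dom ∧ f p.1 ≤ p.2}
  /-- essential smoothness, part 1: differentiability on the interior of the domain -/
  hasGrad : ∀ x ∈ interior dom, HasGradientAt f (grad x) x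
  /-- essential smoothness, part 2: the gradient blows up at the boundary -/
  grad_blowup : ∀ (u : ℕ → X) (x : X), (∀ n, u n ∈ interior dom) → x ∈ frontier dom →
      Tendsto u atTop (nhds x) → Tendsto (fun n => ‖grad (u n)‖) atTop atTop
  /-- `domConj` is the set where the conjugate supremum is finite -/
  domConj_spec : ∀ y : X, y ∈ domConj ↔ BddAbove ((fun x => ⟪x, y⟫_ℝ - f x) '' dom)
  /-- `conj` is the Fenchel conjugate of `φ` -/
  conj_spec : ∀ y ∈ domConj, IsLUB ((fun x => ⟪x, y⟫_ℝ - f x) '' dom) (conj y)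
  int_domConj_nonempty : (interior domConj).Nonempty
  /-- essential strict convexity: `φ` is strictly convex on every convex subset of `dom ∂φ` -/
  strict : ∀ s : Set X,
      s ⊆ {x ∈ dom | ∃ v : X, ∀ z ∈ dom, f x + ⟪v, z - x⟫_ℝ ≤ f z} →
      Convex ℝ s → StrictConvexOn ℝ s f
  hasGradConj : ∀ y ∈ interior domConj, HasGradientAt conj (gradConj y) y
  /-- Bregman projections onto closed convex sets meeting `interior dom` exist
  (Bauschke–Borwein). -/
  proj_exists : ∀ S : Set X, IsClosed S → Convex ℝ S → (S ∩ interior dom).Nonempty →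
      ∀ x ∈ interior dom, ∃ p ∈ S ∩ interior dom, ∀ z ∈ S ∩ dom,
        f p - ⟪p, grad x⟫_ℝ ≤ f z - ⟪z, grad x⟫_ℝ

namespace LegendreFn

variable {X : Type*} [NormedAddCommGroup X] [InnerProductSpace ℝ X] [FiniteDimensional ℝ X]

/-- The Bregman distance `D_φ(x, y)`; the formula is meaningful for `x ∈ dom φ` and
`y ∈ int (dom φ)`. -/
def breg (L : LegendreFn X) (x y : X) : ℝ :=
  L.f x - L.f y - ⟪x - y, L.grad y⟫_ℝ

/-- The Bregman distance from the point `y` to the set `S`: `D_S(y) = inf_{z ∈ S} D_φ(z, y)`. -/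
def distTo (L : LegendreFn X) (S : Set X) (y : X) : ℝ :=
  sInf ((fun z => L.breg z y) '' (S ∩ L.dom))

/-- `p` is the Bregman projection of `x` onto `S`. -/
def IsBregProj (L : LegendreFn X) (S : Set X) (x p : X) : Prop :=
  p ∈ S ∧ p ∈ interior L.dom ∧ ∀ z ∈ S ∩ L.dom, L.breg p x ≤ L.breg z x

/-- The Bregman projection of `x` onto `S` (as a function; well defined whenever the Bregman
projection exists, since it is then unique). -/
def proj (L : LegendreFn X) (S : Set X) (x : X) : X :=
  @Classical.epsilon X ⟨0⟩ (L.IsBregProj S x)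

end LegendreFn

/-- Condition SC (sequential consistency). -/
def SCcond {X : Type*} [NormedAddCommGroup X] [InnerProductSpace ℝ X] [FiniteDimensional ℝ X]
    (L : LegendreFn X) : Prop :=
  ∀ z y : ℕ → X, (∀ n, z n ∈ interior L.dom) → (∀ n, y n ∈ interior L.dom) →
    Bornology.IsBounded (Set.range z) → Bornology.IsBounded (Set.range y) →
    Tendsto (fun n => L.breg (z n) (y n)) atTop (nhds 0) →
    Tendsto (fun n => z n - y n) atTop (nhds 0)

/-- Assumption H0: `C ≠ X`, `dom φ*` is open and `int (dom φ) ∩ C ≠ ∅`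
(`φ` being Legendre is part of the `LegendreFn` structure). -/
def H0 {X : Type*} [NormedAddCommGroup X] [InnerProductSpace ℝ X] [FiniteDimensional ℝ X]
    (L : LegendreFn X) (C : Set X) : Prop :=
  C ≠ Set.univ ∧ IsOpen L.domConj ∧ (interior L.dom ∩ C).Nonempty

/-- `G` is the Moore–Penrose pseudoinverse of `T`. -/
def IsMPInv {E F : Type*} [NormedAddCommGroup E] [InnerProductSpace ℝ E] [FiniteDimensional ℝ E]
    [NormedAddCommGroup F] [InnerProductSpace ℝ F] [FiniteDimensional ℝ F]
    (T : E →L[ℝ] F) (G : F →L[ℝ] E) : Prop :=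
  T ∘L G ∘L T = T ∧ G ∘L T ∘L G = G ∧
    ContinuousLinearMap.adjoint (T ∘L G) = T ∘L G ∧
    ContinuousLinearMap.adjoint (G ∘L T) = G ∘L T

/-- The orthogonal projection onto a subspace, as a map `X →L[ℝ] X`. -/
def projL {X : Type*} [NormedAddCommGroup X] [InnerProductSpace ℝ X] [FiniteDimensional ℝ X]
    (K : Submodule ℝ X) : X →L[ℝ] X :=
  K.subtypeL.comp (K.orthogonalProjectionOnto)

/-- The set `K(x)` of points having the same Bregman projection onto `C` as `x` and not larger
Bregman distance to `C`. -/
def Kset {X : Type*} [NormedAddCommGroup X] [InnerProductSpace ℝ X] [FiniteDimensional ℝ X]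
    (L : LegendreFn X) (C : Set X) (x : X) : Set X :=
  {z | z ∈ interior L.dom ∧ L.proj C z = L.proj C x ∧ L.distTo C z ≤ L.distTo C x}

section Affine

variable {X Y : Type*} [NormedAddCommGroup X] [InnerProductSpace ℝ X] [FiniteDimensional ℝ X]
  [NormedAddCommGroup Y] [InnerProductSpace ℝ Y] [FiniteDimensional ℝ Y]
  {I : Type*} {Yf : I → Type*} [∀ i, NormedAddCommGroup (Yf i)]
  [∀ i, InnerProductSpace ℝ (Yf i)] [∀ i, FiniteDimensional ℝ (Yf i)]

/-- Assumption H2₁: `φ*` is twice differentiable (with second derivative `hess`), and for all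
`x ∈ int (dom φ) ∩ C`, `A ∘ ∇²φ*(∇φ(x)) ≠ 0` and
`sup_i ‖Aᵢ* (Aᵢ ∇²φ*(∇φ(x)) Aᵢ*)† Aᵢ‖ < ∞`. -/
def H21 (L : LegendreFn X) (A : ∀ i, X →L[ℝ] Yf i) (AY : X →L[ℝ] Y) (C : Set X)
    (hess : X → X →L[ℝ] X) : Prop :=
  (∀ y ∈ interior L.domConj, HasFDerivAt L.gradConj (hess y) y) ∧
  ∀ x ∈ interior L.dom ∩ C,
    AY ∘L hess (L.grad x) ≠ 0 ∧
    ∃ M : ℝ, ∀ (i : I) (G : Yf i →L[ℝ] Yf i),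
      IsMPInv (A i ∘L hess (L.grad x) ∘L ContinuousLinearMap.adjoint (A i)) G →
      ‖ContinuousLinearMap.adjoint (A i) ∘L G ∘L A i‖ ≤ M

/-- The orthogonal projection `Q_i(x)` onto `range (H(x) Aᵢ*)`, where `H(x)` (here `Hrt x`) is
the positive square root of `∇²φ*(∇φ(x))`. -/
def Qproj (A : ∀ i, X →L[ℝ] Yf i) (Hrt : X → X →L[ℝ] X) (i : I) (x : X) : X →L[ℝ] X :=
  projL (LinearMap.range ((Hrt x ∘L ContinuousLinearMap.adjoint (A i) : Yf i →L[ℝ] X) : Yf i →ₗ[ℝ] X))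

/-- The subspace `V(x) = range (H(x) A*)`. -/
def Vsub (AY : X →L[ℝ] Y) (Hrt : X → X →L[ℝ] X) (x : X) : Submodule ℝ X :=
  LinearMap.range ((Hrt x ∘L ContinuousLinearMap.adjoint AY : Y →L[ℝ] X) : Y →ₗ[ℝ] X)

/-- `γ_𝒞(x) = inf_{v ∈ V(x) \ {0}} sup_i ‖Q_i(x) v‖² / ‖v‖²`. -/
def gammaC (A : ∀ i, X →L[ℝ] Yf i) (AY : X →L[ℝ] Y) (Hrt : X → X →L[ℝ] X) (x : X) : ℝ :=
  ⨅ v : {v : X // v ∈ Vsub AY Hrt x ∧ v ≠ 0},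
    ⨆ i : I, ‖Qproj A Hrt i x v.1‖ ^ 2 / ‖v.1‖ ^ 2

/-- `σ_𝒞(x)`, the (deterministic, greedy) contraction factor. -/
def sigmaC (L : LegendreFn X) (Cs : I → Set X) (C : Set X) (γ : X → ℝ) (x : X) : ℝ :=
  if x ∈ C then 1 - γ x
  else ⨆ z : ↥(Kset L C x \ C), ⨅ i : I, L.distTo C (L.proj (Cs i) z) / L.distTo C z

end Affine

section Stochastic

variable {X Y : Type*} [NormedAddCommGroup X] [InnerProductSpace ℝ X] [FiniteDimensional ℝ X]
  [NormedAddCommGroup Y] [InnerProductSpace ℝ Y] [FiniteDimensional ℝ Y]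
  {I : Type*} {Yf : I → Type*} [∀ i, NormedAddCommGroup (Yf i)]
  [∀ i, InnerProductSpace ℝ (Yf i)] [∀ i, FiniteDimensional ℝ (Yf i)]
  {Ω : Type*} [MeasurableSpace Ω]

/-- Assumption H2₂ (stochastic version of H2₁, with an essential supremum). -/
def H22 (L : LegendreFn X) (A : ∀ i, X →L[ℝ] Yf i) (AY : X →L[ℝ] Y) (C : Set X)
    (hess : X → X →L[ℝ] X) (P : Measure Ω) (ξ : Ω → I) : Prop :=
  (∀ y ∈ interior L.domConj, HasFDerivAt L.gradConj (hess y) y) ∧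
  ∀ x ∈ interior L.dom ∩ C,
    AY ∘L hess (L.grad x) ≠ 0 ∧
    ∃ M : ℝ, ∀ᵐ ω ∂P, ∀ G : Yf (ξ ω) →L[ℝ] Yf (ξ ω),
      IsMPInv (A (ξ ω) ∘L hess (L.grad x) ∘L ContinuousLinearMap.adjoint (A (ξ ω))) G →
      ‖ContinuousLinearMap.adjoint (A (ξ ω)) ∘L G ∘L A (ξ ω)‖ ≤ M

/-- `Q̄(x) = E[Q_ξ(x)]` (Bochner expectation). -/
def Qbar (A : ∀ i, X →L[ℝ] Yf i) (Hrt : X → X →L[ℝ] X) (P : Measure Ω) (ξ : Ω → I) (x : X) :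
    X →L[ℝ] X :=
  ∫ ω, Qproj A Hrt (ξ ω) x ∂P

/-- `γ_{𝒞,μ}(x) = inf_{v ∈ V(x) \ {0}} ⟪Q̄(x) v, v⟫ / ‖v‖²`. -/
def gammaCmu (A : ∀ i, X →L[ℝ] Yf i) (AY : X →L[ℝ] Y) (Hrt : X → X →L[ℝ] X)
    (P : Measure Ω) (ξ : Ω → I) (x : X) : ℝ :=
  ⨅ v : {v : X // v ∈ Vsub AY Hrt x ∧ v ≠ 0},
    ⟪Qbar A Hrt P ξ x v.1, v.1⟫_ℝ / ‖v.1‖ ^ 2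

/-- `σ_{𝒞,μ}(x)`, the stochastic contraction factor. -/
def sigmaCmu (L : LegendreFn X) (Cs : I → Set X) (C : Set X) (γ : X → ℝ)
    (P : Measure Ω) (ξ : Ω → I) (x : X) : ℝ :=
  if x ∈ C then 1 - γ x
  else ⨆ z : ↥(Kset L C x \ C),
    (∫ ω, L.distTo C (L.proj (Cs (ξ ω)) z) ∂P) / L.distTo C z

/-- `D̄_C(x) = E[D_{C_ξ}(x)]`. -/
def DbarFn (L : LegendreFn X) (Cs : I → Set X) (P : Measure Ω) (ξ : Ω → I) (x : X) : ℝ :=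
  ∫ ω, L.distTo (Cs (ξ ω)) x ∂P

end Stochastic

section ConvexGradient

variable {E : Type*} [NormedAddCommGroup E] [InnerProductSpace ℝ E]
  {f : E → ℝ} {s : Set E} {g x y : E}

theorem ContinuousAt.exists_add_mul_norm_le_of_affine_le (hf : ContinuousAt f x) (hs : s ∈ 𝓝 x) :
    ∃ r > 0, ∀ (v : E) (c : ℝ), (∀ z ∈ s, c + ⟪v, z - x⟫_ℝ ≤ f z) →
      c + r * ‖v‖ ≤ f x + 1 := by
  have hnhds : s ∩ {z | f z < f x + 1} ∈ 𝓝 x :=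
    inter_mem hs (hf.eventually (gt_mem_nhds (lt_add_one (f x))))
  obtain ⟨r, hr, hball⟩ := Metric.nhds_basis_closedBall.mem_iff.1 hnhds
  refine ⟨r, hr, fun v c hv => ?_⟩
  set z := x + r • ‖v‖⁻¹ • v
  have hz : z ∈ Metric.closedBall x r := by
    rw [Metric.mem_closedBall, dist_eq_norm, add_sub_cancel_left, norm_smul, norm_smul,
      Real.norm_of_nonneg hr.le, norm_inv, norm_norm]
    exact mul_le_of_le_one_right hr.le (inv_mul_le_one ..)
  have hinner : ⟪v, z - x⟫_ℝ = r * ‖v‖ := by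
    rw [add_sub_cancel_left, real_inner_smul_right, real_inner_smul_right,
      real_inner_self_eq_norm_sq]
    rcases eq_or_ne ‖v‖ 0 with h | h
    · simp [h]
    · field_simp
  have hfz : f z < f x + 1 := (hball hz).2
  linarith [hv z (hball hz).1]

variable [CompleteSpace E]

theorem ConvexOn.add_inner_sub_le_of_hasGradientAt (hf : ConvexOn ℝ s f) (hx : x ∈ s)
    (hy : y ∈ s) (hg : HasGradientAt f g x) : f x + ⟪g, y - x⟫_ℝ ≤ f y := by
  have hline := hf.comp_affineMap (AffineMap.lineMap (k := ℝ) x y)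
  have hderiv : HasDerivAt (f ∘ AffineMap.lineMap (k := ℝ) x y) ⟪g, y - x⟫_ℝ 0 := by
    simpa using hg.hasFDerivAt.comp_hasDerivAt_of_eq (0 : ℝ)
      (AffineMap.hasDerivAt_lineMap (a := x) (b := y)) (by simp)
  have hslope := hline.le_slope_of_hasDerivAt (by simpa using hx) (by simpa using hy)
    zero_lt_one hderiv
  simp only [slope_def_field, Function.comp_apply, AffineMap.lineMap_apply_zero,
    AffineMap.lineMap_apply_one, sub_zero, div_one] at hslope
  linarith

theorem HasGradientAt.eq_of_add_inner_sub_le (hg : HasGradientAt f g x) (hs : s ∈ 𝓝 x)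
    (hy : ∀ z ∈ s, f x + ⟪y, z - x⟫_ℝ ≤ f z) : y = g := by
  have hmin : IsLocalMin (fun z => f z - ⟪y, z⟫_ℝ) x := by
    filter_upwards [hs] with z hz
    have := hy z hz
    rw [inner_sub_right] at this
    linarith
  have hderiv : HasFDerivAt (fun z => f z - ⟪y, z⟫_ℝ)
      (InnerProductSpace.toDual ℝ E g - InnerProductSpace.toDual ℝ E y) x :=
    hg.hasFDerivAt.sub (InnerProductSpace.toDual ℝ E y).hasFDerivAt
  have := hmin.hasFDerivAt_eq_zero hderiv
  exact ((InnerProductSpace.toDual ℝ E).injective (sub_eq_zero.1 this)).symm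

end ConvexGradient

namespace LegendreFn

variable {X : Type*} [NormedAddCommGroup X] [InnerProductSpace ℝ X] [FiniteDimensional ℝ X]
  (L : LegendreFn X)

theorem add_inner_grad_le {x z : X} (hx : x ∈ interior L.dom) (hz : z ∈ L.dom) :
    L.f x + ⟪L.grad x, z - x⟫_ℝ ≤ L.f z :=
  L.convexOn.add_inner_sub_le_of_hasGradientAt (interior_subset hx) hz (L.hasGrad x hx)

theorem breg_nonneg {x z : X} (hx : x ∈ interior L.dom) (hz : z ∈ L.dom) :
    0 ≤ L.breg z x := by
  have := L.add_inner_grad_le hx hz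
  rw [breg, real_inner_comm]
  linarith

theorem inner_sub_le_conj {y z : X} (hy : y ∈ L.domConj) (hz : z ∈ L.dom) :
    ⟪z, y⟫_ℝ - L.f z ≤ L.conj y :=
  (L.conj_spec y hy).1 ⟨z, hz, rfl⟩

theorem conj_grad {x : X} (hx : x ∈ interior L.dom) :
    L.conj (L.grad x) = ⟪x, L.grad x⟫_ℝ - L.f x := by
  have hmax : IsGreatest ((fun z => ⟪z, L.grad x⟫_ℝ - L.f z) '' L.dom)
      (⟪x, L.grad x⟫_ℝ - L.f x) := by
    refine ⟨⟨x, interior_subset hx, rfl⟩, ?_⟩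
    rintro _ ⟨z, hz, rfl⟩
    have := L.add_inner_grad_le hx hz
    rw [inner_sub_right, real_inner_comm z, real_inner_comm x] at this
    dsimp only
    linarith
  exact (L.conj_spec _ ((L.domConj_spec _).2 hmax.bddAbove)).unique hmax.isLUB

theorem mem_dom_and_f_le_of_tendsto {u : ℕ → X} {x : X} {a : ℝ} (hu : ∀ n, u n ∈ L.dom)
    (hux : Tendsto u atTop (𝓝 x)) (hfa : Tendsto (fun n => L.f (u n)) atTop (𝓝 a)) :
    x ∈ L.dom ∧ L.f x ≤ a :=
  L.closedEpi.mem_of_tendsto (hux.prodMk_nhds hfa) (Eventually.of_forall fun n => ⟨hu n, le_rfl⟩)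

/-- In the interior of `dom φ*` the supremum defining `φ*` is attained: a maximizing sequence
is bounded because `φ*` is bounded above near `w`, and its limit points are maximizers because
`φ` is closed. -/
theorem exists_conj_eq_of_mem_interior {w : X} (hw : w ∈ interior L.domConj) :
    ∃ u ∈ L.dom, L.conj w = ⟪u, w⟫_ℝ - L.f u := by
  obtain ⟨v, hv_mono, -, hv_lim, hv_mem⟩ :=
    (L.conj_spec w (interior_subset hw)).exists_seq_monotone_tendsto
      (L.dom_nonempty.image _)
  choose u hu hvu using hv_mem
  obtain ⟨r, hr, hbound⟩ := (L.hasGradConj w hw).continuousAt.exists_add_mul_norm_le_of_affine_le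
    (mem_interior_iff_mem_nhds.1 hw)
  have hu_bdd : ∀ n, u n ∈ Metric.closedBall 0 ((L.conj w + 1 - v 0) / r) := by
    intro n
    have h := hbound (u n) (v n) fun y hy => by
      have := L.inner_sub_le_conj hy (hu n)
      rw [← hvu n, inner_sub_right]
      linarith
    rw [mem_closedBall_zero_iff, le_div_iff₀ hr]
    linarith [hv_mono (Nat.zero_le n)]
  obtain ⟨x, -, σ, hσ, hux⟩ := tendsto_subseq_of_bounded Metric.isBounded_closedBall hu_bdd
  have hfu : Tendsto (fun n => L.f (u (σ n))) atTop (𝓝 (⟪x, w⟫_ℝ - L.conj w)) :=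
    ((hux.inner tendsto_const_nhds).sub (hv_lim.comp hσ.tendsto_atTop)).congr fun n => by
      simp only [Function.comp_apply, ← hvu (σ n)]
      ring
  obtain ⟨hx, hfx⟩ := L.mem_dom_and_f_le_of_tendsto (fun n => hu (σ n)) hux hfu
  exact ⟨x, hx, le_antisymm (by linarith) (L.inner_sub_le_conj (interior_subset hw) hx)⟩

/-- Essential smoothness forces `dom ∂φ ⊆ int (dom φ)`: at a boundary point `u` with a
subgradient `w`, monotonicity of `∂φ` keeps `∇φ` bounded on the segment from `u` to an interior
point, contradicting the blow-up of `∇φ` at the boundary. -/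
theorem mem_interior_dom_of_add_inner_le {u w : X} (hu : u ∈ L.dom)
    (hw : ∀ z ∈ L.dom, L.f u + ⟪w, z - u⟫_ℝ ≤ L.f z) : u ∈ interior L.dom := by
  by_contra hu_int
  obtain ⟨x₀, hx₀⟩ := L.int_dom_nonempty
  obtain ⟨r, hr, hbound⟩ := (L.hasGrad x₀ hx₀).continuousAt.exists_add_mul_norm_le_of_affine_le
    (mem_interior_iff_mem_nhds.1 hx₀)
  set B := L.f x₀ + 1 - L.f u + |⟪w, x₀ - u⟫_ℝ|
  have hseg : ∀ t ∈ Ioc (0 : ℝ) 1, u + t • (x₀ - u) ∈ interior L.dom := fun t ht =>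
    L.dom_convex.add_smul_sub_mem_interior hu hx₀ ht
  have hgrad_le : ∀ t ∈ Ioc (0 : ℝ) 1, r * ‖L.grad (u + t • (x₀ - u))‖ ≤ B := by
    intro t ht
    set y := u + t • (x₀ - u)
    have hy := hseg t ht
    have hwy := hw y (interior_subset hy)
    have hgu := L.add_inner_grad_le hy hu
    have hgx₀ := hbound (L.grad y) (L.f y + ⟪L.grad y, x₀ - y⟫_ℝ) fun z hz => by
      have := L.add_inner_grad_le hy hz
      rw [add_assoc, ← inner_add_right, sub_add_sub_cancel']
      exact this
    rw [show y - u = t • (x₀ - u) by simp [y], real_inner_smul_right] at hwy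
    rw [show u - y = -t • (x₀ - u) by simp [y], real_inner_smul_right] at hgu
    rw [show x₀ - y = (1 - t) • (x₀ - u) by simp [y]; module, real_inner_smul_right] at hgx₀
    have hmono : ⟪w, x₀ - u⟫_ℝ ≤ ⟪L.grad y, x₀ - u⟫_ℝ :=
      le_of_mul_le_mul_left (by linarith) ht.1
    nlinarith [mul_nonneg (sub_nonneg.2 ht.2) (sub_nonneg.2 hmono), le_abs_self ⟪w, x₀ - u⟫_ℝ,
      neg_abs_le ⟪w, x₀ - u⟫_ℝ]
  have ht : ∀ n : ℕ, 1 / ((n : ℝ) + 1) ∈ Ioc (0 : ℝ) 1 := fun n =>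
    ⟨by positivity, (div_le_one (by positivity)).2 (by linarith [n.cast_nonneg (α := ℝ)])⟩
  have hlim : Tendsto (fun n : ℕ => u + (1 / ((n : ℝ) + 1)) • (x₀ - u)) atTop (𝓝 u) := by
    simpa using ((tendsto_one_div_add_atTop_nhds_zero_nat (𝕜 := ℝ)).smul_const (x₀ - u)).const_add u
  obtain ⟨n, hn⟩ := ((L.grad_blowup _ u (fun n => hseg _ (ht n)) ⟨subset_closure hu, hu_int⟩
    hlim).eventually_gt_atTop (B / r)).exists
  exact (div_lt_iff₀' hr).1 hn |>.not_ge (hgrad_le _ (ht n))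

theorem gradConj_spec {w : X} (hw : w ∈ interior L.domConj) :
    L.gradConj w ∈ interior L.dom ∧ L.grad (L.gradConj w) = w ∧
      L.conj w = ⟪L.gradConj w, w⟫_ℝ - L.f (L.gradConj w) := by
  obtain ⟨u, hu, hconj⟩ := L.exists_conj_eq_of_mem_interior hw
  have hw_subgrad : ∀ z ∈ L.dom, L.f u + ⟪w, z - u⟫_ℝ ≤ L.f z := fun z hz => by
    have := L.inner_sub_le_conj (interior_subset hw) hz
    rw [inner_sub_right, real_inner_comm z w, real_inner_comm u w]
    linarith
  have hu_subgrad : ∀ y ∈ L.domConj, L.conj w + ⟪u, y - w⟫_ℝ ≤ L.conj y := fun y hy => by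
    have := L.inner_sub_le_conj hy hu
    rw [inner_sub_right]
    linarith
  have hu_int := L.mem_interior_dom_of_add_inner_le hu hw_subgrad
  have hw_eq : w = L.grad u :=
    (L.hasGrad u hu_int).eq_of_add_inner_sub_le (mem_interior_iff_mem_nhds.1 hu_int) hw_subgrad
  obtain rfl : u = L.gradConj w :=
    (L.hasGradConj w hw).eq_of_add_inner_sub_le (mem_interior_iff_mem_nhds.1 hw) hu_subgrad
  exact ⟨hu_int, hw_eq.symm, hconj⟩

theorem breg_gradConj_sub_breg {x w : X} (hx : x ∈ interior L.dom)
    (hw : w ∈ interior L.domConj) (z : X) :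
    L.breg z (L.gradConj w) - L.breg z x =
      L.conj w - L.conj (L.grad x) - ⟪z, w - L.grad x⟫_ℝ := by
  obtain ⟨-, hgrad, hconj⟩ := L.gradConj_spec hw
  rw [hconj, L.conj_grad hx, breg, breg, hgrad]
  simp only [inner_sub_left, inner_sub_right]
  ring

theorem isBregProj_proj {S : Set X} (hS : IsClosed S) (hSc : Convex ℝ S)
    (hSd : (S ∩ interior L.dom).Nonempty) {x : X} (hx : x ∈ interior L.dom) :
    L.IsBregProj S x (L.proj S x) := by
  obtain ⟨p, ⟨hpS, hp_int⟩, hp_min⟩ := L.proj_exists S hS hSc hSd x hx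
  refine Classical.epsilon_spec ⟨p, hpS, hp_int, fun z hz => ?_⟩
  have := hp_min z hz
  simp only [breg, inner_sub_left]
  linarith

/-- In the three-point identity `D(z, x) = D(z, q) + D(q, x) + ⟪∇φ q - ∇φ x, z - q⟫` the last
term is the first-order optimality condition of `q` on the convex set `S ∩ dom φ`. -/
theorem breg_add_breg_le {S : Set X} (hSc : Convex ℝ S) {x q z : X}
    (hq : L.IsBregProj S x q) (hz : z ∈ S ∩ L.dom) :
    L.breg z q + L.breg q x ≤ L.breg z x := by
  obtain ⟨hqS, hq_int, hq_min⟩ := hq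
  have hmin : IsMinOn (fun y => L.f y - ⟪L.grad x, y⟫_ℝ) (S ∩ L.dom) q := fun y hy => by
    have := hq_min y hy
    simp only [breg, inner_sub_right, real_inner_comm (L.grad x)] at this
    simp only [mem_ofPred_eq]
    linarith
  have hvar := hmin.localize.hasFDerivWithinAt_nonneg
    ((L.hasGrad q hq_int).hasFDerivAt.sub (innerSL ℝ (L.grad x)).hasFDerivAt).hasFDerivWithinAt
    (sub_mem_posTangentConeAt_of_segment_subset
      ((hSc.inter L.dom_convex).segment_subset ⟨hqS, interior_subset hq_int⟩ hz))
  simp only [sub_apply, InnerProductSpace.toDual_apply_apply, innerSL_apply_apply] at hvar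
  simp only [breg, inner_sub_right, real_inner_comm (L.grad q),
    real_inner_comm (L.grad x)] at hvar ⊢
  linarith

end LegendreFn

/-- Properties of the dual objective `Ψ^x_C` of the Bregman projection
problem onto the affine set `C = {z | A z = b}`. -/
theorem stmt_1 {X Y : Type*} [NormedAddCommGroup X] [InnerProductSpace ℝ X]
    [FiniteDimensional ℝ X] [NormedAddCommGroup Y] [InnerProductSpace ℝ Y]
    [FiniteDimensional ℝ Y]
    (L : LegendreFn X) (A : X →L[ℝ] Y) (b : Y) (C : Set X) (hC : C = {z | A z = b})
    (hCint : (C ∩ interior L.dom).Nonempty)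
    (Ψ : X → Y → ℝ)
    (hΨ : ∀ (x : X) (lam : Y), Ψ x lam =
      L.conj (L.grad x + ContinuousLinearMap.adjoint A lam) - L.conj (L.grad x) - ⟪lam, b⟫_ℝ)
    (x : X) (hx : x ∈ interior L.dom) (lam : Y)
    (hfeas : L.grad x + ContinuousLinearMap.adjoint A lam ∈ interior L.domConj) :
    (∀ z ∈ C ∩ L.dom,
        Ψ x lam =
          L.breg z (L.gradConj (L.grad x + ContinuousLinearMap.adjoint A lam)) -
            L.breg z x) ∧
      ∀ z ∈ C ∩ L.dom,
        L.breg z (L.proj C x) ≤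
          L.breg z (L.gradConj (L.grad x + ContinuousLinearMap.adjoint A lam)) := by
  set p := L.gradConj (L.grad x + ContinuousLinearMap.adjoint A lam)
  have hdual : ∀ z ∈ C ∩ L.dom, Ψ x lam = L.breg z p - L.breg z x := by
    rintro z ⟨hzC, -⟩
    have hAz : A z = b := by rwa [hC] at hzC
    rw [L.breg_gradConj_sub_breg hx hfeas, hΨ, add_sub_cancel_left,
      ContinuousLinearMap.adjoint_inner_right, hAz, real_inner_comm]
  have hCc : Convex ℝ C := hC ▸ (convex_singleton b).linear_preimage A.toLinearMap
  have hproj := L.isBregProj_proj (hC ▸ isClosed_singleton.preimage A.continuous) hCc hCint hx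
  refine ⟨hdual, fun z hz => ?_⟩
  have hq : L.proj C x ∈ C ∩ L.dom := ⟨hproj.1, interior_subset hproj.2.1⟩
  have hpyth := L.breg_add_breg_le hCc hproj hz
  have hq_nonneg := L.breg_nonneg (L.gradConj_spec hfeas).1 hq.2
  linarith [hdual z hz, hdual _ hq]
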